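/- arXiv:2007.04169 — 2 statements merged into one kernel-verified Lean document; each statement's English description precedes it below -/
import Mathlib

section
/- Let n ≥ 1 and m : Fin n → Fin n → ℝ, and define the bilinear model f(x) = ∑_{j} ∑_{k} m_{jk}·x_j·x_k. Then for all points a, b ∈ ℝⁿ and every feature i, the interventional Shapley attribution with explanation point b and reference point a is given in closed form by BS_i(f,b,a) = (b_i − a_i) · ∑_{j} (m_{ij} + m_{ji})·(a_j + b_j)/2. -/
def patch {n : ℕ} (x r : Fin n → ℝ) (S : Finset (Fin n)) : Fin n → ℝ :=
  fun j => if j ∈ S then x j else r j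

noncomputable def BS {n : ℕ} (f : (Fin n → ℝ) → ℝ) (x r : Fin n → ℝ) (i : Fin n) : ℝ :=
  ∑ S ∈ (Finset.univ.erase i).powerset,
    ((S.card.factorial * (n - S.card - 1).factorial : ℝ) / (n.factorial : ℝ)) *
      (f (patch x r (insert i S)) - f (patch x r S))

/-!
The Shapley weights `w(s) = s! (n-1-s)! / n!` sum to `1` over the subsets `S` of the other
`n - 1` features and are invariant under complementing `S` among them. For a quadratic form `Q`,
`Q y - Q x = (y i - x i) * ∂ᵢQ((x + y) / 2)` whenever `x` and `y` differ only in coordinate `i`,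
so `BSᵢ` is `(bᵢ - aᵢ)` times `∂ᵢQ` at the `w`-average of the midpoints of `patch b a S` and
`patch b a (S ∪ {i})`. Pairing `S` with its complement shows that this average is `(a + b) / 2`.
-/

open Finset

noncomputable def shapleyWeight (n s : ℕ) : ℝ :=
  (s.factorial * (n - s - 1).factorial : ℝ) / n.factorial

theorem BS_eq_sum_shapleyWeight {n : ℕ} (f : (Fin n → ℝ) → ℝ) (x r : Fin n → ℝ) (i : Fin n) :
    BS f x r i = ∑ S ∈ (univ.erase i).powerset,
      shapleyWeight n #S * (f (patch x r (insert i S)) - f (patch x r S)) :=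
  rfl

theorem shapleyWeight_symm {N s : ℕ} (hs : s ≤ N) :
    shapleyWeight (N + 1) (N - s) = shapleyWeight (N + 1) s := by
  rw [shapleyWeight, shapleyWeight, show N + 1 - (N - s) - 1 = s by omega,
    show N + 1 - s - 1 = N - s by omega, mul_comm]

theorem sum_shapleyWeight {α : Type*} (D : Finset α) :
    ∑ S ∈ D.powerset, shapleyWeight (#D + 1) #S = 1 := by
  have hterm : ∀ s ∈ range (#D + 1),
      (#D).choose s • shapleyWeight (#D + 1) s = 1 / (#D + 1 : ℝ) := by
    intro s hs
    have hsD : s ≤ #D := Nat.lt_succ_iff.mp (mem_range.mp hs)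
    rw [nsmul_eq_mul, shapleyWeight, show #D + 1 - s - 1 = #D - s by omega, Nat.factorial_succ,
      ← Nat.choose_mul_factorial_mul_factorial hsD]
    have hchoose : ((#D).choose s : ℝ) ≠ 0 := Nat.cast_ne_zero.mpr (Nat.choose_pos hsD).ne'
    push_cast
    field_simp
  rw [sum_powerset_apply_card, sum_congr rfl hterm, sum_const, card_range, nsmul_eq_mul]
  push_cast
  field_simp

theorem sum_powerset_shapleyWeight_mul_sdiff {α : Type*} [DecidableEq α] (D : Finset α)
    (g : Finset α → ℝ) :
    ∑ S ∈ D.powerset, shapleyWeight (#D + 1) #S * g (D \ S) =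
      ∑ S ∈ D.powerset, shapleyWeight (#D + 1) #S * g S := by
  refine sum_nbij' (D \ ·) (D \ ·) (by simp) (by simp) (fun S hS => ?_) (fun S hS => ?_) ?_
  · exact Finset.sdiff_sdiff_eq_self (mem_powerset.mp hS)
  · exact Finset.sdiff_sdiff_eq_self (mem_powerset.mp hS)
  · intro S hS
    rw [card_sdiff_of_subset (mem_powerset.mp hS),
      shapleyWeight_symm (card_le_card (mem_powerset.mp hS))]

theorem quadratic_sub_quadratic_of_eq_off {n : ℕ} (m : Fin n → Fin n → ℝ) (x y : Fin n → ℝ)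
    (i : Fin n) (hxy : ∀ j ≠ i, x j = y j) :
    ∑ j, ∑ k, m j k * y j * y k - ∑ j, ∑ k, m j k * x j * x k =
      (y i - x i) * ∑ k, (m i k + m k i) * (x k + y k) / 2 := by
  have hd : ∀ j ≠ i, y j - x j = 0 := fun j hj => by rw [hxy j hj, sub_self]
  have hmid : ∑ j, ∑ k, m j k * y j * y k - ∑ j, ∑ k, m j k * x j * x k =
      ∑ j, ∑ k, m j k * (y j - x j) * (x k + y k) / 2 +
        ∑ k, ∑ j, m j k * (x j + y j) * (y k - x k) / 2 := by
    rw [sum_comm (f := fun k j => m j k * (x j + y j) * (y k - x k) / 2)]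
    simp only [← sum_add_distrib, ← sum_sub_distrib]
    exact sum_congr rfl fun j _ => sum_congr rfl fun k _ => by ring
  have hrow : ∑ j, ∑ k, m j k * (y j - x j) * (x k + y k) / 2 =
      ∑ k, m i k * (y i - x i) * (x k + y k) / 2 :=
    sum_eq_single i (fun j _ hj => by simp [hd j hj]) (by simp)
  have hcol : ∑ k, ∑ j, m j k * (x j + y j) * (y k - x k) / 2 =
      ∑ j, m j i * (x j + y j) * (y i - x i) / 2 :=
    sum_eq_single i (fun k _ hk => by simp [hd k hk]) (by simp)
  rw [hmid, hrow, hcol, mul_sum, ← sum_add_distrib]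
  exact sum_congr rfl fun k _ => by ring

theorem patch_add_patch_insert_sdiff {n : ℕ} (x r : Fin n → ℝ) {i : Fin n}
    {S : Finset (Fin n)} (hS : S ⊆ univ.erase i) (k : Fin n) :
    patch x r S k + patch x r (insert i (univ.erase i \ S)) k = r k + x k := by
  by_cases hki : k = i
  · subst hki
    have hkS : k ∉ S := fun hk => (notMem_erase k univ) (hS hk)
    simp [patch, hkS, add_comm]
  · by_cases hkS : k ∈ S <;> simp [patch, hki, hkS, add_comm]

theorem sum_shapleyWeight_mul_patch_add_patch_insert {n : ℕ} (x r : Fin n → ℝ) (i k : Fin n) :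
    ∑ S ∈ (univ.erase i).powerset,
        shapleyWeight n #S * (patch x r S k + patch x r (insert i S) k) = r k + x k := by
  have hcard : #(univ.erase i) + 1 = n := by
    rw [card_erase_add_one (mem_univ i), card_univ, Fintype.card_fin]
  have hweights := sum_shapleyWeight (univ.erase i)
  have hsymm :=
    sum_powerset_shapleyWeight_mul_sdiff (univ.erase i) fun T => patch x r (insert i T) k
  rw [hcard] at hweights hsymm
  calc ∑ S ∈ (univ.erase i).powerset,
        shapleyWeight n #S * (patch x r S k + patch x r (insert i S) k)
      = ∑ S ∈ (univ.erase i).powerset, shapleyWeight n #S *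
          (patch x r S k + patch x r (insert i (univ.erase i \ S)) k) := by
        simp only [mul_add, sum_add_distrib, hsymm]
    _ = ∑ S ∈ (univ.erase i).powerset, shapleyWeight n #S * (r k + x k) :=
        sum_congr rfl fun S hS => by
          rw [patch_add_patch_insert_sdiff x r (mem_powerset.mp hS)]
    _ = r k + x k := by rw [← sum_mul, hweights, one_mul]

theorem BS_bilinear_closed_form_general (n : ℕ) (m : Fin n → Fin n → ℝ)
    (f : (Fin n → ℝ) → ℝ)
    (hf : f = fun x => ∑ j, ∑ k, m j k * x j * x k)
    (a b : Fin n → ℝ) (i : Fin n) :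
    BS f b a i = (b i - a i) * ∑ j, (m i j + m j i) * (a j + b j) / 2 := by
  subst hf
  have hdiff : ∀ S ∈ (univ.erase i).powerset,
      (∑ j, ∑ k, m j k * patch b a (insert i S) j * patch b a (insert i S) k) -
          ∑ j, ∑ k, m j k * patch b a S j * patch b a S k =
        (b i - a i) * ∑ k, (m i k + m k i) * (patch b a S k + patch b a (insert i S) k) / 2 := by
    intro S hS
    have hiS : i ∉ S := fun hi => (notMem_erase i univ) (mem_powerset.mp hS hi)
    rw [quadratic_sub_quadratic_of_eq_off m _ _ i fun j hj => by simp [patch, hj]]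
    simp [patch, hiS]
  calc BS _ b a i
      = ∑ S ∈ (univ.erase i).powerset, shapleyWeight n #S * ((b i - a i) *
          ∑ k, (m i k + m k i) * (patch b a S k + patch b a (insert i S) k) / 2) :=
        (BS_eq_sum_shapleyWeight _ b a i).trans <| sum_congr rfl fun S hS => by rw [hdiff S hS]
    _ = (b i - a i) * ∑ k, (m i k + m k i) * (∑ S ∈ (univ.erase i).powerset,
          shapleyWeight n #S * (patch b a S k + patch b a (insert i S) k)) / 2 := by
        simp only [mul_sum, sum_div]
        rw [sum_comm]
        exact sum_congr rfl fun k _ => sum_congr rfl fun S _ => by ring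
    _ = (b i - a i) * ∑ j, (m i j + m j i) * (a j + b j) / 2 := by
        simp only [sum_shapleyWeight_mul_patch_add_patch_insert]

theorem BS_bilinear_closed_form (n : ℕ) (hn : 1 ≤ n) (m : Fin n → Fin n → ℝ)
    (f : (Fin n → ℝ) → ℝ)
    (hf : f = fun x => ∑ j, ∑ k, m j k * x j * x k)
    (a b : Fin n → ℝ) (i : Fin n) :
    BS f b a i = (b i - a i) * ∑ j, (m i j + m j i) * (a j + b j) / 2 :=
  BS_bilinear_closed_form_general n m f hf a b i
end

section
/- Two-dimensional Stokes-type area formula for the attribution difference between the straight-line path and an axis-aligned path: let g, h : ℝ → ℝ be continuously differentiable, m ∈ ℝ, and define f(x₁,x₂) = g(x₁) + h(x₂) + m·x₁·x₂. For points a = (a₁,a₂) and b = (b₁,b₂) in ℝ², the attribution to feature 1 along the axis-aligned path a → (b₁,a₂) → b equals g(b₁) − g(a₁) + m·a₂·(b₁ − a₁), and the straight-line Integrated Gradients attribution exceeds it by exactly m times half the swept area: IG_1(f,a,b) − (g(b₁) − g(a₁) + m·a₂·(b₁ − a₁)) = m·(b₁ − a₁)·(b₂ − a₂)/2. -/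
/-!
Along the straight line the partial derivative `∂₁f = g' (x₁) + m x₂` sees `x₂` grow linearly from
`a₂` to `b₂`, so it averages to `a₂ + (b₂ - a₂) / 2`, whereas the axis-aligned path holds `x₂ = a₂`
while feature 1 moves; the `g'` parts both integrate to `g b₁ - g a₁`.
-/

noncomputable def IG {n : ℕ} (f : (Fin n → ℝ) → ℝ) (a b : Fin n → ℝ) (i : Fin n) : ℝ :=
  (b i - a i) * ∫ t in (0:ℝ)..1, fderiv ℝ f (fun j => a j + t * (b j - a j)) (Pi.single i 1)

theorem fderiv_add_add_mul_mul_single {ι : Type*} [Fintype ι] [DecidableEq ι] {g h : ℝ → ℝ}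
    (m : ℝ) {i j : ι} (hij : i ≠ j) {x : ι → ℝ} (hg : DifferentiableAt ℝ g (x i))
    (hh : DifferentiableAt ℝ h (x j)) :
    fderiv ℝ (fun x : ι → ℝ => g (x i) + h (x j) + m * x i * x j) x (Pi.single i 1)
      = deriv g (x i) + m * x j := by
  have hi := hasFDerivAt_apply (𝕜 := ℝ) i x
  have hj := hasFDerivAt_apply (𝕜 := ℝ) j x
  have hf : HasFDerivAt (fun x : ι → ℝ => g (x i) + h (x j) + m * x i * x j) _ x :=
    ((hg.hasDerivAt.comp_hasFDerivAt x hi).add (hh.hasDerivAt.comp_hasFDerivAt x hj)).add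
      ((hi.const_mul m).mul hj)
  rw [hf.fderiv]
  simp [hij.symm, mul_comm]

theorem mul_integral_deriv_comp_segment {g : ℝ → ℝ} (hg : ContDiff ℝ 1 g) (x y : ℝ) :
    (y - x) * ∫ t in (0:ℝ)..1, deriv g (x + t * (y - x)) = g y - g x := by
  have hderiv : ∀ t ∈ Set.uIcc (0:ℝ) 1,
      HasDerivAt (fun t => g (x + t * (y - x))) ((y - x) * deriv g (x + t * (y - x))) t := by
    intro t _
    have hline : HasDerivAt (fun t : ℝ => x + t * (y - x)) (y - x) t := by
      simpa using ((hasDerivAt_id t).mul_const (y - x)).const_add x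
    rw [mul_comm]
    exact (hg.differentiable one_ne_zero _).hasDerivAt.comp t hline
  have hcont : Continuous fun t : ℝ => (y - x) * deriv g (x + t * (y - x)) := by
    have := hg.continuous_deriv le_rfl
    fun_prop
  rw [← intervalIntegral.integral_const_mul,
    intervalIntegral.integral_eq_sub_of_hasDerivAt hderiv (hcont.intervalIntegrable 0 1)]
  simp

theorem integral_const_add_mul_zero_one (c e : ℝ) : ∫ t in (0:ℝ)..1, (c + t * e) = c + e / 2 := by
  have hlin : IntervalIntegrable (fun t : ℝ => t * e) MeasureTheory.volume 0 1 :=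
    (continuous_id.mul continuous_const).intervalIntegrable 0 1
  rw [intervalIntegral.integral_add intervalIntegrable_const hlin, intervalIntegral.integral_const,
    intervalIntegral.integral_mul_const, integral_id, smul_eq_mul]
  ring

theorem stokes_area_formula_two_dim (g h : ℝ → ℝ)
    (hg : ContDiff ℝ 1 g) (hh : ContDiff ℝ 1 h) (m : ℝ)
    (f : (Fin 2 → ℝ) → ℝ)
    (hf : f = fun x => g (x 0) + h (x 1) + m * x 0 * x 1)
    (a b : Fin 2 → ℝ) :
    (f (Function.update a 0 (b 0)) - f a
        = g (b 0) - g (a 0) + m * a 1 * (b 0 - a 0)) ∧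
    IG f a b 0 - (g (b 0) - g (a 0) + m * a 1 * (b 0 - a 0))
        = m * (b 0 - a 0) * (b 1 - a 1) / 2 := by
  subst hf
  refine ⟨by simp only [Function.update_self, Function.update_of_ne one_ne_zero]; ring, ?_⟩
  have hpartial : ∀ t : ℝ, fderiv ℝ (fun x : Fin 2 → ℝ => g (x 0) + h (x 1) + m * x 0 * x 1)
      (fun j => a j + t * (b j - a j)) (Pi.single 0 1)
        = deriv g (a 0 + t * (b 0 - a 0)) + m * (a 1 + t * (b 1 - a 1)) := fun t =>
    fderiv_add_add_mul_mul_single m zero_ne_one (hg.differentiable one_ne_zero _)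
      (hh.differentiable one_ne_zero _)
  have hcont := hg.continuous_deriv le_rfl
  rw [IG, funext hpartial,
    intervalIntegral.integral_add ((by fun_prop : Continuous _).intervalIntegrable 0 1)
      ((by fun_prop : Continuous _).intervalIntegrable 0 1),
    mul_add, mul_integral_deriv_comp_segment hg, intervalIntegral.integral_const_mul,
    integral_const_add_mul_zero_one]
  ring
end
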